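/- The cyclotomic identity holds: in the ring of formal power series over ℚ[x], 1/(1 - x t) = Π_{j ≥ 1} (1/(1 - t^j))^{M_j(x)}, where exponentiation by M_j(x) is defined via the binomial series (1/(1-t))^a = Σ_{d≥0} (-1)^d C(-a, d) t^d. -/

import Mathlib

open Polynomial

/-- The `j`-th necklace polynomial `M_j(x) = (1/j) ∑_{e ∣ j} μ(e) x^(j/e)` over `ℚ`. -/
noncomputable def necklacePoly (j : ℕ) : Polynomial ℚ :=
  Polynomial.C ((j : ℚ)⁻¹) *
    ∑ e ∈ j.divisors, Polynomial.C ((ArithmeticFunction.moebius e : ℤ) : ℚ) *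
      Polynomial.X ^ (j / e)

/-- The power series `(1/(1 - t^j))^(M_j(x))` in `ℚ[x][[t]]`, where exponentiation is
defined by the binomial series: the coefficient of `t^(j*k)` is
`binom(M_j(x) + k - 1, k) = M_j(x)(M_j(x)+1)⋯(M_j(x)+k-1)/k!`. -/
noncomputable def cycFactor (j : ℕ) : PowerSeries (Polynomial ℚ) :=
  PowerSeries.mk fun n =>
    if j ∣ n then
      Polynomial.C (((n / j).factorial : ℚ)⁻¹) *
        Polynomial.eval (necklacePoly j) (ascPochhammer (Polynomial ℚ) (n / j))
    else 0

namespace CycAux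

open PowerSeries

abbrev Rx := Polynomial ℚ

/-- The geometric series `1/(1-t^j)`. -/
noncomputable def geo (j : ℕ) : PowerSeries Rx :=
  PowerSeries.mk fun n => if j ∣ n then 1 else 0

lemma one_sub_mul_geo {j : ℕ} (hj : 1 ≤ j) :
    (1 - PowerSeries.X ^ j) * geo j = 1 := by
  refine PowerSeries.ext fun n => ?_
  rw [sub_mul, one_mul, map_sub, PowerSeries.coeff_X_pow_mul']
  simp only [geo, PowerSeries.coeff_mk, PowerSeries.coeff_one]
  rcases eq_or_ne n 0 with rfl | hn
  · have h0 : ¬ j ≤ 0 := by omega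
    simp [h0]
  · by_cases hjn : j ∣ n
    · have h1 : j ≤ n := Nat.le_of_dvd (Nat.pos_of_ne_zero hn) hjn
      have h2 : j ∣ n - j := Nat.dvd_sub hjn dvd_rfl
      simp [hjn, h1, h2, hn]
    · by_cases h1 : j ≤ n
      · have h2 : ¬ j ∣ n - j := fun h => hjn (by
          have := Nat.dvd_add h (dvd_refl j)
          rwa [Nat.sub_add_cancel h1] at this)
        simp [hjn, h1, h2, hn]
      · simp [hjn, h1, hn]

/-- `j * M_j(x)`. -/
noncomputable def gp (j : ℕ) : Rx := (j : Rx) * necklacePoly j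

/-- Gauss necklace identity: `∑_{j ∣ n} j M_j(x) = x^n`. -/
lemma gauss {n : ℕ} (hn : 0 < n) :
    ∑ j ∈ n.divisors, gp j = Polynomial.X ^ n := by
  have key : ∀ m : ℕ, 0 < m →
      ∑ x ∈ m.divisorsAntidiagonal,
        (ArithmeticFunction.moebius x.1) • ((Polynomial.X : Rx) ^ x.2) = gp m := by
    intro m hm
    rw [gp, necklacePoly, ← mul_assoc]
    have hC : (m : Rx) * Polynomial.C ((m : ℚ)⁻¹) = 1 := by
      rw [← Polynomial.C_eq_natCast, ← Polynomial.C_mul,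
        mul_inv_cancel₀ (by exact_mod_cast hm.ne')]
      simp
    rw [hC, one_mul,
      Nat.sum_divisorsAntidiagonal (f := fun a b =>
        (ArithmeticFunction.moebius a) • ((Polynomial.X : Rx) ^ b))]
    refine Finset.sum_congr rfl fun e _ => ?_
    rw [zsmul_eq_mul, Polynomial.C_eq_intCast]
  exact (ArithmeticFunction.sum_eq_iff_sum_smul_moebius_eq
    (f := fun j => gp j) (g := fun n => (Polynomial.X : Rx) ^ n)).mpr key n hn

lemma coeff_cycFactor (j n : ℕ) :
    PowerSeries.coeff n (cycFactor j) =
      if j ∣ n then Polynomial.C (((n / j).factorial : ℚ)⁻¹) *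
        Polynomial.eval (necklacePoly j) (ascPochhammer Rx (n / j)) else 0 := by
  simp [cycFactor]

lemma coeff_cycFactor_zero (j : ℕ) :
    PowerSeries.coeff 0 (cycFactor j) = 1 := by
  simp [coeff_cycFactor]

lemma factor_ode {j : ℕ} (hj : 1 ≤ j) :
    (1 - PowerSeries.X ^ j) * d⁄dX Rx (cycFactor j)
      = (PowerSeries.C (gp j) * PowerSeries.X ^ (j - 1)) * cycFactor j := by
  refine PowerSeries.ext fun n => ?_
  rw [sub_mul, one_mul, map_sub, PowerSeries.coeff_derivative, mul_assoc,
    PowerSeries.coeff_C_mul, PowerSeries.coeff_X_pow_mul',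
    PowerSeries.coeff_X_pow_mul']
  by_cases hdvd : j ∣ (n + 1)
  · obtain ⟨k, hk⟩ := hdvd
    match k, hk with
    | 0, hk => omega
    | 1, hk =>
      -- n + 1 = j
      have hjn : ¬ j ≤ n := by omega
      have hj1 : j - 1 ≤ n := by omega
      have hsub : n - (j - 1) = 0 := by omega
      rw [if_neg hjn, if_pos hj1, hsub, coeff_cycFactor_zero, coeff_cycFactor,
        if_pos ⟨1, hk⟩]
      have hdiv : (n + 1) / j = 1 := by
        rw [hk, Nat.mul_div_cancel_left _ (show 0 < j by omega)]
      rw [hdiv]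
      simp only [Nat.factorial_one, Nat.cast_one, inv_one, map_one, one_mul,
        ascPochhammer_one, Polynomial.eval_X, mul_one, gp]
      have : ((n : Rx) + 1) = (j : Rx) := by
        have : ((n + 1 : ℕ) : Rx) = (j : Rx) := by rw [hk]; push_cast; ring
        push_cast at this; exact this
      rw [sub_zero, this]
      ring
    | (m + 2), hk =>
      have hq : n + 1 = j * (m + 1) + j := by rw [hk]; ring
      have ht : 1 ≤ j * (m + 1) := Nat.one_le_iff_ne_zero.mpr (by positivity)
      have hjn : j ≤ n := by omega
      have hj1 : j - 1 ≤ n := by omega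
      have hsub0 : n - j = j * (m + 1) - 1 := by omega
      have hsub1 : j * (m + 1) - 1 + 1 = j * (m + 1) := by omega
      have hsub2 : n - (j - 1) = j * (m + 1) := by omega
      rw [if_pos hjn, if_pos hj1, hsub0, PowerSeries.coeff_derivative, hsub1, hsub2]
      simp only [coeff_cycFactor]
      rw [if_pos (show j ∣ n + 1 from ⟨m + 2, hk⟩),
        if_pos (show j ∣ j * (m + 1) from ⟨m + 1, rfl⟩)]
      have hd1 : (n + 1) / j = m + 2 := by
        rw [hk]; exact Nat.mul_div_cancel_left _ (by omega)
      have hd2 : j * (m + 1) / j = m + 1 := Nat.mul_div_cancel_left _ (by omega)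
      rw [hd1, hd2]
      rw [ascPochhammer_succ_right, Polynomial.eval_mul, Polynomial.eval_add,
        Polynomial.eval_X, Polynomial.eval_natCast]
      set A : Rx := Polynomial.eval (necklacePoly j) (ascPochhammer Rx (m + 1)) with hA
      set M : Rx := necklacePoly j with hM
      have h3 : ((m : ℚ) + 2) ≠ 0 := by positivity
      have hq2 : (((m + 2).factorial : ℚ))⁻¹ * ((m : ℚ) + 2)
          = (((m + 1).factorial : ℚ))⁻¹ := by
        have key : ((m + 2).factorial : ℚ) = ((m : ℚ) + 2) * ((m + 1).factorial : ℚ) := by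
          rw [Nat.factorial_succ (m + 1)]; push_cast; ring
        rw [key, mul_inv, mul_comm (((m : ℚ) + 2))⁻¹ _, mul_assoc, inv_mul_cancel₀ h3,
          mul_one]
      have h2 : ((m : Rx) + 2) = Polynomial.C ((m : ℚ) + 2) := by
        rw [map_add, Polynomial.C_eq_natCast, (map_ofNat Polynomial.C 2).symm]
      have hfac : (Polynomial.C (((m + 2).factorial : ℚ)⁻¹) : Rx) * ((m : Rx) + 2)
          = Polynomial.C (((m + 1).factorial : ℚ)⁻¹) := by
        rw [h2, ← Polynomial.C_mul, hq2]
      have hcast1 : ((n : Rx) + 1) = (j : Rx) * ((m : Rx) + 2) := by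
        have h := congrArg (fun t : ℕ => (t : Rx)) hk
        push_cast at h
        exact h
      have hcast3 : ((j * (m + 1) - 1 : ℕ) : Rx) + 1 = (j : Rx) * ((m : Rx) + 1) := by
        rw [Nat.cast_sub ht]; push_cast; ring
      rw [hcast1, hcast3, gp]
      push_cast
      linear_combination (A * (M + ((m : Rx) + 1)) * (j : Rx)) * hfac
  · -- j does not divide n + 1
    have e1 : PowerSeries.coeff (n + 1) (cycFactor j) = 0 := by
      rw [coeff_cycFactor, if_neg hdvd]
    rw [e1, zero_mul, zero_sub]
    have e2 : (if j ≤ n then PowerSeries.coeff (n - j + 1) (cycFactor j)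
        * ((n : Rx) - (j : Rx) + 1) else 0) = 0 := by
      split_ifs with h
      · have hnd : ¬ j ∣ (n - j + 1) := by
          intro hd
          apply hdvd
          have : n - j + 1 + j = n + 1 := by omega
          calc j ∣ (n - j + 1) + j := Nat.dvd_add hd dvd_rfl
            _ = n + 1 := this
        rw [coeff_cycFactor, if_neg hnd, zero_mul]
      · rfl
    have e2' : (if j ≤ n then PowerSeries.coeff (n - j) (d⁄dX Rx (cycFactor j)) else 0)
        = 0 := by
      split_ifs with h
      · rw [PowerSeries.coeff_derivative]
        have hnd : ¬ j ∣ (n - j + 1) := by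
          intro hd
          apply hdvd
          have heq : n - j + 1 + j = n + 1 := by omega
          calc j ∣ (n - j + 1) + j := Nat.dvd_add hd dvd_rfl
            _ = n + 1 := heq
        rw [coeff_cycFactor, if_neg hnd, zero_mul]
      · rfl
    rw [e2', neg_zero]
    have e3 : (if j - 1 ≤ n then PowerSeries.coeff (n - (j - 1)) (cycFactor j) else 0)
        = 0 := by
      split_ifs with h
      · have hjn1 : j ≤ n + 1 := by omega
        have hne : j ≠ n + 1 := fun hh => hdvd (hh ▸ dvd_rfl)
        have hjn : j ≤ n := by omega
        have hsub : n - (j - 1) = n - j + 1 := by omega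
        have hnd : ¬ j ∣ (n - j + 1) := by
          intro hd
          apply hdvd
          have heq : n - j + 1 + j = n + 1 := by omega
          calc j ∣ (n - j + 1) + j := Nat.dvd_add hd dvd_rfl
            _ = n + 1 := heq
        rw [hsub, coeff_cycFactor, if_neg hnd]
      · rfl
    rw [e3, mul_zero]

lemma deriv_factor {j : ℕ} (hj : 1 ≤ j) :
    d⁄dX Rx (cycFactor j)
      = (PowerSeries.C (gp j) * PowerSeries.X ^ (j - 1) * geo j) * cycFactor j := by
  calc d⁄dX Rx (cycFactor j)
      = ((1 - PowerSeries.X ^ j) * geo j) * d⁄dX Rx (cycFactor j) := by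
        rw [one_sub_mul_geo hj, one_mul]
    _ = geo j * ((1 - PowerSeries.X ^ j) * d⁄dX Rx (cycFactor j)) := by ring
    _ = _ := by rw [factor_ode hj]; ring

lemma deriv_prod (s : Finset ℕ) (hs : ∀ j ∈ s, 1 ≤ j) :
    d⁄dX Rx (∏ j ∈ s, cycFactor j)
      = (∑ j ∈ s, PowerSeries.C (gp j) * PowerSeries.X ^ (j - 1) * geo j)
          * ∏ j ∈ s, cycFactor j := by
  induction s using Finset.cons_induction with
  | empty => simp
  | cons a s ha ih =>
    rw [Finset.prod_cons, Finset.sum_cons]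
    rw [show (d⁄dX Rx (cycFactor a * ∏ j ∈ s, cycFactor j))
        = PowerSeries.derivativeFun (cycFactor a * ∏ j ∈ s, cycFactor j) from rfl,
      PowerSeries.derivativeFun_mul]
    rw [show ∀ f : PowerSeries Rx, PowerSeries.derivativeFun f = d⁄dX Rx f from fun _ => rfl,
      show ∀ f : PowerSeries Rx, PowerSeries.derivativeFun f = d⁄dX Rx f from fun _ => rfl,
      ih (fun j hj => hs j (by simp [hj])),
      deriv_factor (hs a (by simp))]
    simp only [smul_eq_mul]
    ring

lemma coeff_S {N m : ℕ} (hm : m + 1 ≤ N) :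
    PowerSeries.coeff m
        (∑ j ∈ Finset.Icc 1 N, PowerSeries.C (gp j) * PowerSeries.X ^ (j - 1) * geo j)
      = Polynomial.X ^ (m + 1) := by
  rw [map_sum]
  have step : ∀ j ∈ Finset.Icc 1 N,
      PowerSeries.coeff m (PowerSeries.C (gp j) * PowerSeries.X ^ (j - 1) * geo j)
        = if j ∣ (m + 1) then gp j else 0 := by
    intro j hj
    have hj1 : 1 ≤ j := (Finset.mem_Icc.mp hj).1
    rw [mul_assoc, PowerSeries.coeff_C_mul, PowerSeries.coeff_X_pow_mul']
    by_cases h1 : j - 1 ≤ m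
    · have hsub : m - (j - 1) = m + 1 - j := by omega
      rw [if_pos h1, hsub]
      simp only [geo, PowerSeries.coeff_mk]
      by_cases hd : j ∣ (m + 1)
      · have : j ∣ (m + 1 - j) := Nat.dvd_sub hd dvd_rfl
        rw [if_pos this, if_pos hd, mul_one]
      · have : ¬ j ∣ (m + 1 - j) := by
          intro hdd
          apply hd
          have heq : m + 1 - j + j = m + 1 := by omega
          calc j ∣ (m + 1 - j) + j := Nat.dvd_add hdd dvd_rfl
            _ = m + 1 := heq
        rw [if_neg this, if_neg hd, mul_zero]
    · have hd : ¬ j ∣ (m + 1) := by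
        intro hdd
        have := Nat.le_of_dvd (by omega) hdd
        omega
      rw [if_neg h1, if_neg hd, mul_zero]
  rw [Finset.sum_congr rfl step, Finset.sum_ite, Finset.sum_const_zero, add_zero]
  have hset : Finset.filter (fun j => j ∣ (m + 1)) (Finset.Icc 1 N) = (m + 1).divisors := by
    ext j
    simp only [Finset.mem_filter, Finset.mem_Icc, Nat.mem_divisors]
    constructor
    · rintro ⟨⟨h1, h2⟩, h3⟩
      exact ⟨h3, by omega⟩
    · rintro ⟨h1, _⟩
      have hj0 : 1 ≤ j := Nat.pos_of_dvd_of_pos h1 (by omega)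
      have hjle : j ≤ m + 1 := Nat.le_of_dvd (by omega) h1
      exact ⟨⟨hj0, by omega⟩, h1⟩
  rw [hset, gauss (by omega)]

end CycAux

/-- The cyclotomic identity `1/(1 - x t) = ∏_{j ≥ 1} (1/(1 - t^j))^(M_j(x))`:
each coefficient of the (t-adically convergent) infinite product, computed from any
sufficiently large finite partial product, equals the corresponding coefficient `x^d`
of `1/(1 - x t)`. -/
theorem cyclotomic_identity :
    ∀ d N : ℕ, d ≤ N →
      PowerSeries.coeff d (∏ j ∈ Finset.Icc 1 N, cycFactor j) =
        Polynomial.X ^ d := by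
  intro d
  induction d using Nat.strong_induction_on with
  | _ d ih =>
    intro N hdN
    match d, hdN with
    | 0, hdN =>
      rw [PowerSeries.coeff_zero_eq_constantCoeff, map_prod]
      rw [Finset.prod_congr rfl (fun j _ => ?_), Finset.prod_const_one, pow_zero]
      rw [← PowerSeries.coeff_zero_eq_constantCoeff_apply]
      exact CycAux.coeff_cycFactor_zero j
    | (n + 1), hdN =>
      have hD := CycAux.deriv_prod (Finset.Icc 1 N)
        (fun j hj => (Finset.mem_Icc.mp hj).1)
      have hc := congrArg (PowerSeries.coeff n) hD
      rw [PowerSeries.coeff_derivative, PowerSeries.coeff_mul] at hc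
      have hsum : ∑ p ∈ Finset.HasAntidiagonal.antidiagonal n,
          PowerSeries.coeff p.1
            (∑ j ∈ Finset.Icc 1 N,
              PowerSeries.C (CycAux.gp j) * PowerSeries.X ^ (j - 1)
                * CycAux.geo j)
            * PowerSeries.coeff p.2 (∏ j ∈ Finset.Icc 1 N, cycFactor j)
          = ∑ p ∈ Finset.HasAntidiagonal.antidiagonal n, (Polynomial.X : Polynomial ℚ) ^ (n + 1) := by
        refine Finset.sum_congr rfl fun p hp => ?_
        have hpn := Finset.HasAntidiagonal.mem_antidiagonal.mp hp
        have h1 : p.1 + 1 ≤ N := by omega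
        have h2 : p.2 < n + 1 := by omega
        rw [CycAux.coeff_S h1, ih p.2 (by omega) N (by omega), ← pow_add]
        congr 1
        omega
      rw [hsum, Finset.sum_const, Finset.Nat.card_antidiagonal] at hc
      have hc' : PowerSeries.coeff (n + 1)
          (∏ j ∈ Finset.Icc 1 N, cycFactor j) * ((n : Polynomial ℚ) + 1)
          = (Polynomial.X : Polynomial ℚ) ^ (n + 1) * ((n : Polynomial ℚ) + 1) := by
        rw [hc, nsmul_eq_mul]
        push_cast
        ring
      have hne : ((n : Polynomial ℚ) + 1) ≠ 0 :=
        Nat.cast_add_one_ne_zero (R := Polynomial ℚ) n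
      exact mul_right_cancel₀ hne hc'
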